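/- Let G be the graph with vertex set {v_{i,j} : i,j ∈ {1,...,6}, i ≠ j} and edges v_{i,j} v_{j,i} for all i ≠ j, and v_{i,j} v_{i,j'} for all j ≠ j' both different from i (i.e., G = L(S(K₆))). Then G is a claw-free 5-regular graph of order 30 and its square G² satisfies χ(G²) = 6. -/

import Mathlib

open SimpleGraph

/-- The square of a graph: vertices at distance at most 2 are adjacent. -/
def square {V : Type*} (G : SimpleGraph V) : SimpleGraph V where
  Adj u v := u ≠ v ∧ (G.Adj u v ∨ ∃ w, G.Adj u w ∧ G.Adj w v)
  symm := ⟨by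
    rintro u v ⟨h, h2 | ⟨w, hw1, hw2⟩⟩
    · exact ⟨h.symm, Or.inl h2.symm⟩
    · exact ⟨h.symm, Or.inr ⟨w, hw2.symm, hw1.symm⟩⟩⟩
  loopless := ⟨fun u h => h.1 rfl⟩

def lskAdj (n : ℕ) (a b : {p : Fin n × Fin n // p.1 ≠ p.2}) : Prop :=
  a ≠ b ∧ ((a.1.1 = b.1.2 ∧ a.1.2 = b.1.1) ∨ a.1.1 = b.1.1)

instance (n : ℕ) : DecidableRel (lskAdj n) := fun a b => by
  unfold lskAdj; infer_instance

/-- The line graph of the subdivision of `K_n`: vertices `v_{i,j}` (`i ≠ j`),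
with edges `v_{i,j} v_{j,i}` and `v_{i,j} v_{i,j'}`. -/
def LSK (n : ℕ) : SimpleGraph {p : Fin n × Fin n // p.1 ≠ p.2} where
  Adj := lskAdj n
  symm := ⟨by
    rintro a b ⟨hne, ⟨h1, h2⟩ | h1⟩
    · exact ⟨hne.symm, Or.inl ⟨h2.symm, h1.symm⟩⟩
    · exact ⟨hne.symm, Or.inr h1.symm⟩⟩
  loopless := ⟨fun a h => h.1 rfl⟩

instance (n : ℕ) : DecidableRel (LSK n).Adj :=
  inferInstanceAs (DecidableRel (lskAdj n))

/-- `G` is claw-free: no induced `K_{1,3}`. -/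
def ClawFree {V : Type*} (G : SimpleGraph V) : Prop :=
  ∀ v a b c, G.Adj v a → G.Adj v b → G.Adj v c →
    a ≠ b → a ≠ c → b ≠ c → G.Adj a b ∨ G.Adj a c ∨ G.Adj b c

/-!
The closed neighbourhood of a vertex is a clique in the square of any graph, so
`χ(G²) ≥ Δ(G) + 1`, which is `n` for `G = L(S(K_n))`. Conversely, two distinct vertices
`v_{i,j}`, `v_{i',j}` are at distance at least 3 in `G`, so colouring `v_{i,j}` by `j` is proper.
Claw-freeness holds because all neighbours of `v_{i,j}` except `v_{j,i}` lie in the clique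
`{v_{i,k}}`.
-/

theorem square_isClique_insert_neighborFinset {V : Type*} [DecidableEq V] (G : SimpleGraph V)
    (v : V) [Fintype (G.neighborSet v)] :
    (square G).IsClique (insert v (G.neighborFinset v) : Finset V) := by
  intro a ha b hb hab
  simp only [Finset.coe_insert, Set.mem_insert_iff, Finset.mem_coe, mem_neighborFinset] at ha hb
  refine ⟨hab, ?_⟩
  rcases ha with rfl | ha <;> rcases hb with rfl | hb
  · exact absurd rfl hab
  · exact Or.inl hb
  · exact Or.inl ha.symm
  · exact Or.inr ⟨v, ha.symm, hb⟩

theorem degree_add_one_le_chromaticNumber_square {V : Type*} (G : SimpleGraph V) (v : V)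
    [Fintype (G.neighborSet v)] : (G.degree v + 1 : ℕ∞) ≤ (square G).chromaticNumber := by
  classical
  have h := (square_isClique_insert_neighborFinset G v).card_le_chromaticNumber
  rwa [Finset.card_insert_of_notMem (G.notMem_neighborFinset_self v),
    card_neighborFinset_eq_degree, Nat.cast_add, Nat.cast_one] at h

namespace LSK

theorem card_vertex (n : ℕ) : Fintype.card {p : Fin n × Fin n // p.1 ≠ p.2} = n * (n - 1) := by
  rw [Fintype.card_subtype]
  have : Finset.univ.filter (fun p : Fin n × Fin n => p.1 ≠ p.2) = Finset.univ.offDiag := by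
    ext; simp [Finset.mem_offDiag]
  rw [this, Finset.offDiag_card, Finset.card_univ, Fintype.card_fin, Nat.mul_sub_one]

theorem clawFree (n : ℕ) : ClawFree (LSK n) := by
  intro v a b c ha hb hc hab hac hbc
  have sameRow : ∀ x y : {p : Fin n × Fin n // p.1 ≠ p.2},
      x ≠ y → x.1.1 = y.1.1 → (LSK n).Adj x y := fun x y hxy h => ⟨hxy, Or.inr h⟩
  have swap_unique : ∀ x y : {p : Fin n × Fin n // p.1 ≠ p.2},
      (v.1.1 = x.1.2 ∧ v.1.2 = x.1.1) → (v.1.1 = y.1.2 ∧ v.1.2 = y.1.1) → x = y := by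
    rintro x y ⟨h1, h2⟩ ⟨h3, h4⟩
    exact Subtype.ext (Prod.ext (h2.symm.trans h4) (h1.symm.trans h3))
  rcases ha.2 with ha' | ha' <;> rcases hb.2 with hb' | hb' <;> rcases hc.2 with hc' | hc'
  all_goals grind

theorem mem_neighborSet_iff {n : ℕ} (v w : {p : Fin n × Fin n // p.1 ≠ p.2}) :
    w ∈ (LSK n).neighborSet v ↔
      w.1 = (v.1.2, v.1.1) ∨ (w.1.1 = v.1.1 ∧ w.1.2 ≠ v.1.2) := by
  obtain ⟨⟨i, j⟩, hij⟩ := v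
  obtain ⟨⟨k, l⟩, hkl⟩ := w
  simp only [mem_neighborSet, LSK, lskAdj, ne_eq, Subtype.mk.injEq, Prod.mk.injEq]
  grind

def neighborSetEquiv {n : ℕ} (v : {p : Fin n × Fin n // p.1 ≠ p.2}) :
    (LSK n).neighborSet v ≃ {k : Fin n // k ≠ v.1.1} where
  toFun w := if h : w.1.1.1 = v.1.1 then ⟨w.1.1.2, h ▸ w.1.2.symm⟩ else ⟨w.1.1.1, h⟩
  invFun k :=
    if h : k.1 = v.1.2 then
      ⟨⟨(v.1.2, v.1.1), v.2.symm⟩, (mem_neighborSet_iff _ _).2 (Or.inl rfl)⟩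
    else ⟨⟨(v.1.1, k.1), k.2.symm⟩, (mem_neighborSet_iff _ _).2 (Or.inr ⟨rfl, h⟩)⟩
  left_inv w := by
    obtain ⟨⟨⟨k, l⟩, hkl⟩, hw⟩ := w
    rw [mem_neighborSet_iff] at hw
    grind
  right_inv k := by grind

theorem degree_eq {n : ℕ} (v : {p : Fin n × Fin n // p.1 ≠ p.2}) :
    (LSK n).degree v = n - 1 := by
  rw [← card_neighborSet_eq_degree, Fintype.card_congr (neighborSetEquiv v),
    Fintype.card_subtype_compl, Fintype.card_subtype_eq, Fintype.card_fin]

theorem isRegularOfDegree (n : ℕ) : (LSK n).IsRegularOfDegree (n - 1) := degree_eq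

theorem square_adj_snd_ne {n : ℕ} {a b : {p : Fin n × Fin n // p.1 ≠ p.2}}
    (h : (square (LSK n)).Adj a b) : a.1.2 ≠ b.1.2 := by
  obtain ⟨⟨i, j⟩, hij⟩ := a
  obtain ⟨⟨i', j'⟩, hij'⟩ := b
  rcases h with ⟨hne, h | ⟨⟨⟨k, l⟩, hkl⟩, h1, h2⟩⟩
  all_goals simp_all [LSK, lskAdj]
  all_goals grind

theorem colorable_square (n : ℕ) : (square (LSK n)).Colorable n :=
  ⟨Coloring.mk (fun v => v.1.2) square_adj_snd_ne⟩

theorem chromaticNumber_square {n : ℕ} (hn : 2 ≤ n) : (square (LSK n)).chromaticNumber = n := by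
  refine le_antisymm (colorable_square n).chromaticNumber_le ?_
  have h := degree_add_one_le_chromaticNumber_square (LSK n)
    ⟨(⟨0, by omega⟩, ⟨1, by omega⟩), by simp [Fin.ext_iff]⟩
  rwa [degree_eq, ← Nat.cast_add_one, Nat.sub_one_add_one (by omega)] at h

end LSK

/-- `G = L(S(K₆))` is a claw-free 5-regular graph of order 30 with
`χ(G²) = 6`. -/
theorem stmt7 :
    ClawFree (LSK 6) ∧ (LSK 6).IsRegularOfDegree 5 ∧
    Fintype.card {p : Fin 6 × Fin 6 // p.1 ≠ p.2} = 30 ∧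
    (square (LSK 6)).chromaticNumber = 6 :=
  ⟨LSK.clawFree 6, LSK.isRegularOfDegree 6, LSK.card_vertex 6,
    LSK.chromaticNumber_square (by norm_num)⟩
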